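/- For the uniform distribution on {1,...,n}³ (n ≥ 3) as input to typeOf with the first coordinate secret, the leakage H(typeOf(H,L₁,L₂) | (L₁,L₂)) is strictly positive. -/

import Mathlib

open Finset Real

/-- Probability mass of the event `X = x` under distribution `p` on a finite sample space. -/
noncomputable def mass {Ω α : Type*} [Fintype Ω] [DecidableEq α]
    (p : Ω → ℝ) (X : Ω → α) (x : α) : ℝ :=
  ∑ ω ∈ Finset.univ.filter (fun ω => X ω = x), p ω

/-- Shannon entropy of a finitely supported random variable (convention `0 * log 0 = 0`
since `Real.log 0 = 0`). -/
noncomputable def entropy {Ω α : Type*} [Fintype Ω] [Fintype α] [DecidableEq α]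
    (p : Ω → ℝ) (X : Ω → α) : ℝ :=
  -∑ x, mass p X x * Real.log (mass p X x)

/-- Conditional Shannon entropy `H(X | L) = ∑ l p(l) H(X | L = l)`, written via the joint mass. -/
noncomputable def condEntropy {Ω α β : Type*} [Fintype Ω] [Fintype α] [Fintype β]
    [DecidableEq α] [DecidableEq β] (p : Ω → ℝ) (X : Ω → α) (L : Ω → β) : ℝ :=
  -∑ l, ∑ x, mass p (fun ω => (X ω, L ω)) (x, l) *
      Real.log (mass p (fun ω => (X ω, L ω)) (x, l) / mass p L l)

inductive TriType | EQUILATERAL | ISOSCELES | SCALENE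
deriving DecidableEq

instance instFintypeTriType : Fintype TriType where
  elems := {TriType.EQUILATERAL, TriType.ISOSCELES, TriType.SCALENE}
  complete := by intro x; cases x <;> simp

open TriType

def typeOf {α : Type*} [DecidableEq α] (h l1 l2 : α) : TriType :=
  if h = l1 ∧ l1 = l2 then EQUILATERAL
  else if h = l1 ∨ h = l2 ∨ l1 = l2 then ISOSCELES
  else SCALENE

/-! For low inputs `l₁ ≠ l₂`, the secret `l₁` makes the triangle isosceles while a secret
different from both makes it scalene. So given `(l₁, l₂)` the output takes a value of conditional
probability strictly between `0` and `1`, and the corresponding term of the conditional entropy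
is strictly negative, while all other terms are nonpositive. -/

lemma typeOf_self_left {α : Type*} [DecidableEq α] {a b : α} (hab : a ≠ b) :
    typeOf a a b = ISOSCELES := by
  simp [typeOf, hab]

lemma typeOf_of_pairwise_ne {α : Type*} [DecidableEq α] {h l1 l2 : α}
    (h1 : h ≠ l1) (h2 : h ≠ l2) (h12 : l1 ≠ l2) : typeOf h l1 l2 = SCALENE := by
  simp [typeOf, h1, h2, h12]

lemma mul_log_div_nonpos {a b : ℝ} (ha : 0 ≤ a) (hab : a ≤ b) : a * log (a / b) ≤ 0 := by
  rcases ha.eq_or_lt with rfl | ha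
  · simp
  · have hb : 0 < b := ha.trans_le hab
    exact mul_nonpos_of_nonneg_of_nonpos ha.le
      (log_nonpos (div_nonneg ha.le hb.le) (div_le_one_of_le₀ hab hb.le))

lemma mul_log_div_neg {a b : ℝ} (ha : 0 < a) (hab : a < b) : a * log (a / b) < 0 :=
  have hb : 0 < b := ha.trans hab
  mul_neg_of_pos_of_neg ha (log_neg (div_pos ha hb) ((div_lt_one hb).2 hab))

section Mass

variable {Ω α β : Type*} [Fintype Ω] [DecidableEq α] [DecidableEq β] {p : Ω → ℝ}

lemma mass_nonneg (hp : ∀ ω, 0 ≤ p ω) (X : Ω → α) (x : α) : 0 ≤ mass p X x :=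
  Finset.sum_nonneg fun ω _ => hp ω

lemma mass_pos_of_apply_eq (hp : ∀ ω, 0 ≤ p ω) (X : Ω → α) (ω : Ω) (hpω : 0 < p ω) :
    0 < mass p X (X ω) :=
  Finset.sum_pos' (fun ω _ => hp ω) ⟨ω, by simp, hpω⟩

lemma mass_pair_le (hp : ∀ ω, 0 ≤ p ω) (X : Ω → α) (L : Ω → β) (x : α) (l : β) :
    mass p (fun ω => (X ω, L ω)) (x, l) ≤ mass p L l :=
  Finset.sum_le_sum_of_subset_of_nonneg (fun ω => by simp_all) fun ω _ _ => hp ω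

lemma mass_pair_lt (hp : ∀ ω, 0 ≤ p ω) (X : Ω → α) (L : Ω → β) {x : α} (ω : Ω)
    (hx : X ω ≠ x) (hpω : 0 < p ω) :
    mass p (fun ω => (X ω, L ω)) (x, L ω) < mass p L (L ω) :=
  Finset.sum_lt_sum_of_subset (fun ω' => by simp_all) (by simp) (by simp [hx]) hpω
    fun ω' _ _ => hp ω'

theorem condEntropy_pos_of_mass_lt [Fintype α] [Fintype β] (hp : ∀ ω, 0 ≤ p ω)
    (X : Ω → α) (L : Ω → β) {x : α} {l : β} (hpos : 0 < mass p (fun ω => (X ω, L ω)) (x, l))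
    (hlt : mass p (fun ω => (X ω, L ω)) (x, l) < mass p L l) :
    0 < condEntropy p X L := by
  have hterm : ∀ x l, mass p (fun ω => (X ω, L ω)) (x, l) *
      log (mass p (fun ω => (X ω, L ω)) (x, l) / mass p L l) ≤ 0 := fun x l =>
    mul_log_div_nonpos (mass_nonneg hp _ _) (mass_pair_le hp X L x l)
  rw [condEntropy, neg_pos]
  refine Finset.sum_neg' (fun l _ => Finset.sum_nonpos fun x _ => hterm x l) ⟨l, by simp, ?_⟩
  exact Finset.sum_neg' (fun x _ => hterm x l) ⟨x, by simp, mul_log_div_neg hpos hlt⟩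

end Mass

/-- Under the uniform distribution on `(Fin n) × (Fin n) × (Fin n)` with `n ≥ 3`, the
triangle program (first coordinate secret) has strictly positive leakage. -/
theorem triangle_leakage_pos (n : ℕ) (hn : 3 ≤ n) :
    0 < condEntropy
        (fun _ : Fin n × Fin n × Fin n => (1 : ℝ) / (Fintype.card (Fin n × Fin n × Fin n)))
        (fun ω => typeOf ω.1 ω.2.1 ω.2.2)
        (fun ω => ω.2) := by
  obtain ⟨m, rfl⟩ : ∃ m, n = m + 3 := ⟨n - 3, by omega⟩
  set T := Fin (m + 3)
  set p : T × T × T → ℝ := fun _ => 1 / Fintype.card (T × T × T)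
  have hp_pos : ∀ ω, 0 < p ω := fun _ => by positivity
  have hp : ∀ ω, 0 ≤ p ω := fun ω => (hp_pos ω).le
  have h2 : 2 < m + 3 := by omega
  have h01 : (0 : T) ≠ 1 := by simp [T]
  have h20 : (2 : T) ≠ 0 := by simp [T, Fin.ext_iff, Nat.mod_eq_of_lt h2]
  have h21 : (2 : T) ≠ 1 := by simp [T, Fin.ext_iff, Nat.mod_eq_of_lt h2]
  have hiso := mass_pos_of_apply_eq hp (fun ω => (typeOf ω.1 ω.2.1 ω.2.2, ω.2)) (0, 0, 1)
    (hp_pos (0, 0, 1))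
  simp only [typeOf_self_left h01] at hiso
  have hsca := mass_pair_lt hp (fun ω => typeOf ω.1 ω.2.1 ω.2.2) (fun ω => ω.2) (x := ISOSCELES)
    (2, 0, 1) (by simp only [typeOf_of_pairwise_ne h20 h21 h01]; decide) (hp_pos (2, 0, 1))
  exact condEntropy_pos_of_mass_lt hp _ _ hiso hsca
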